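/- Mollified density bound near the axis: Let ρ₀ : ℝ³ → ℝ be axisymmetric, measurable, with 0 < m ≤ ρ₀ ≤ M and C₀ := ‖(ρ₀−1)/r‖_∞ < ∞. Let J^ε be a standard axisymmetric mollifier supported in {0 ≤ r ≤ 2ε, |x₃| ≤ ε} with ∫J^ε = 1, and define ρ₀^ε(x) = (J^ε * ρ₀)(x) − (J^ε * (ρ₀−1))(0,0,x₃). Then ρ₀^ε = 1 on the axis {r = 0}, and there is an absolute constant C with |ρ₀^ε(x) − 1| ≤ C C₀ r(x) for all x. -/

import Mathlib

open MeasureTheory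

/-- Distance to the `x₃`-axis in `ℝ³`. -/
noncomputable def cylR (x : EuclideanSpace ℝ (Fin 3)) : ℝ :=
  Real.sqrt ((x 0) ^ 2 + (x 1) ^ 2)

/-- The point `(0, 0, z)` on the `x₃`-axis. -/
noncomputable def axisPt (z : ℝ) : EuclideanSpace ℝ (Fin 3) :=
  (WithLp.equiv 2 (Fin 3 → ℝ)).symm ![0, 0, z]

/-- The rescaled mollifier `J^ε(x) = ε^{-3} J(x/ε)`. -/
noncomputable def moll (J : EuclideanSpace ℝ (Fin 3) → ℝ) (ε : ℝ)
    (x : EuclideanSpace ℝ (Fin 3)) : ℝ :=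
  ε⁻¹ ^ 3 * J (ε⁻¹ • x)

lemma cylR_nonneg (x : EuclideanSpace ℝ (Fin 3)) : 0 ≤ cylR x := Real.sqrt_nonneg _

lemma axisPt_apply (z : ℝ) : axisPt z 0 = 0 ∧ axisPt z 1 = 0 ∧ axisPt z 2 = z := by
  refine ⟨?_, ?_, ?_⟩ <;> simp [axisPt]

lemma cylR_eq_norm (x : EuclideanSpace ℝ (Fin 3)) : cylR x = ‖x - axisPt (x 2)‖ := by
  rw [EuclideanSpace.norm_eq]
  simp only [Fin.sum_univ_three, Real.norm_eq_abs, sq_abs]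
  simp [axisPt, cylR]

lemma axisPt_sub (z w : ℝ) : axisPt (z - w) = axisPt z - axisPt w := by
  apply PiLp.ext
  intro i
  fin_cases i <;> simp [axisPt]

lemma sub_apply2 (x y : EuclideanSpace ℝ (Fin 3)) : (x - y) 2 = x 2 - y 2 := by simp

lemma cylR_le (x y : EuclideanSpace ℝ (Fin 3)) : cylR y ≤ cylR x + cylR (x - y) := by
  rw [cylR_eq_norm, cylR_eq_norm, cylR_eq_norm, sub_apply2, axisPt_sub]
  have : y - axisPt (y 2) = (x - axisPt (x 2)) - ((x - y) - (axisPt (x 2) - axisPt (y 2))) := by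
    abel
  rw [this]
  exact norm_sub_le _ _

lemma cylR_smul (c : ℝ) (x : EuclideanSpace ℝ (Fin 3)) : cylR (c • x) = |c| * cylR x := by
  simp only [cylR, PiLp.smul_apply, smul_eq_mul, mul_pow]
  rw [← mul_add, Real.sqrt_mul (sq_nonneg c), Real.sqrt_sq_eq_abs]

lemma cylR_zero_eq_axisPt {x : EuclideanSpace ℝ (Fin 3)} (h : cylR x = 0) :
    x = axisPt (x 2) := by
  have h0 : (x 0) ^ 2 + (x 1) ^ 2 = 0 := by
    have := Real.sqrt_eq_zero'.mp h
    nlinarith [sq_nonneg (x 0), sq_nonneg (x 1)]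
  have h1 : x 0 = 0 := by nlinarith [sq_nonneg (x 0), sq_nonneg (x 1)]
  have h2 : x 1 = 0 := by nlinarith [sq_nonneg (x 0), sq_nonneg (x 1)]
  apply PiLp.ext
  intro i
  fin_cases i <;> simp [axisPt, h1, h2]

lemma cylR_axisPt (z : ℝ) : cylR (axisPt z) = 0 := by
  simp [cylR, axisPt]

set_option maxHeartbeats 1600000 in
private theorem mollified_density_axis_bound_aux (J : EuclideanSpace ℝ (Fin 3) → ℝ)
    (hJreg : ContDiff ℝ (⊤ : ℕ∞) J) (hJ01 : ∀ x, 0 ≤ J x ∧ J x ≤ 1)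
    (hJsupp : ∀ x, J x ≠ 0 → cylR x ≤ 2 ∧ |x 2| ≤ 1)
    (hJint : ∫ x, J x = 1)
    (hJaxi : ∀ x y, cylR x = cylR y → x 2 = y 2 → J x = J y) :
    ∃ C > (0 : ℝ), ∀ (ρ₀ : EuclideanSpace ℝ (Fin 3) → ℝ) (m M C₀ ε : ℝ),
      Measurable ρ₀ → 0 < m → (∀ x, m ≤ ρ₀ x ∧ ρ₀ x ≤ M) →
      (∀ x y, cylR x = cylR y → x 2 = y 2 → ρ₀ x = ρ₀ y) →
      (∀ x, |ρ₀ x - 1| ≤ C₀ * cylR x) →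
      0 < ε →
      (∀ x, cylR x = 0 →
        ((∫ y, moll J ε (x - y) * ρ₀ y)
          - ∫ y, moll J ε (axisPt (x 2) - y) * (ρ₀ y - 1)) = 1) ∧
      (∀ x, |((∫ y, moll J ε (x - y) * ρ₀ y)
          - ∫ y, moll J ε (axisPt (x 2) - y) * (ρ₀ y - 1)) - 1| ≤ C * C₀ * cylR x) := by
  classical
  have hJc : Continuous J := hJreg.continuous
  have hsupp3 : ∀ x, J x ≠ 0 → ‖x‖ ≤ 3 := by
    intro x hx
    obtain ⟨h1, h2⟩ := hJsupp x hx
    have hs : Real.sqrt ((x 0) ^ 2 + (x 1) ^ 2) ≤ 2 := h1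
    have hsq : (x 0) ^ 2 + (x 1) ^ 2 ≤ 4 := by
      nlinarith [Real.sq_sqrt (by positivity : (0:ℝ) ≤ (x 0) ^ 2 + (x 1) ^ 2),
        Real.sqrt_nonneg ((x 0) ^ 2 + (x 1) ^ 2)]
    have hx2 : (x 2) ^ 2 ≤ 1 := by nlinarith [sq_abs (x 2), abs_nonneg (x 2)]
    rw [EuclideanSpace.norm_eq]
    simp only [Fin.sum_univ_three, Real.norm_eq_abs, sq_abs]
    have h9 : (x 0) ^ 2 + (x 1) ^ 2 + (x 2) ^ 2 ≤ 3 ^ 2 := by nlinarith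
    calc Real.sqrt ((x 0) ^ 2 + (x 1) ^ 2 + (x 2) ^ 2)
        ≤ Real.sqrt (3 ^ 2) := Real.sqrt_le_sqrt h9
      _ = 3 := Real.sqrt_sq (by norm_num)
  have hJcs : HasCompactSupport J := by
    apply HasCompactSupport.intro (isCompact_closedBall (0 : EuclideanSpace ℝ (Fin 3)) 3)
    intro x hx
    by_contra h
    exact hx (Metric.mem_closedBall.mpr (by simpa [dist_eq_norm] using hsupp3 x h))
  obtain ⟨K, hK⟩ := hJreg.lipschitzWith_of_hasCompactSupport hJcs (by simp)
  set V := (volume (Metric.ball (0 : EuclideanSpace ℝ (Fin 3)) 1)).toReal with hV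
  have hVpos : 0 < V := by
    apply ENNReal.toReal_pos
    · exact (Metric.measure_ball_pos volume 0 one_pos).ne'
    · exact measure_ball_lt_top.ne
  have hKnn : (0:ℝ) ≤ (K : ℝ) := K.coe_nonneg
  refine ⟨192 * (K : ℝ) * V + 6, by positivity, ?_⟩
  intro ρ₀ m M C₀ ε hmeas hm hb haxi hC₀ hε
  have hC₀0 : 0 ≤ C₀ := by
    have h1 : cylR ((WithLp.equiv 2 (Fin 3 → ℝ)).symm ![1, 0, 0]) = 1 := by
      simp [cylR]
    have h2 := hC₀ ((WithLp.equiv 2 (Fin 3 → ℝ)).symm ![1, 0, 0])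
    rw [h1, mul_one] at h2
    exact le_trans (abs_nonneg _) h2
  have hmoll_nn : ∀ z, 0 ≤ moll J ε z := fun z => mul_nonneg (by positivity) (hJ01 _).1
  have hmoll_supp : ∀ z, moll J ε z ≠ 0 → ‖z‖ ≤ 3 * ε ∧ cylR z ≤ 2 * ε := by
    intro z hz
    have hJz : J (ε⁻¹ • z) ≠ 0 := by
      intro h; exact hz (by simp [moll, h])
    have hn := hsupp3 _ hJz
    have hc := (hJsupp _ hJz).1
    rw [norm_smul, Real.norm_eq_abs, abs_inv, abs_of_pos hε] at hn
    rw [cylR_smul, abs_inv, abs_of_pos hε] at hc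
    constructor
    · have := mul_le_mul_of_nonneg_left hn hε.le
      calc ‖z‖ = ε * (ε⁻¹ * ‖z‖) := by field_simp
        _ ≤ ε * 3 := this
        _ = 3 * ε := by ring
    · have := mul_le_mul_of_nonneg_left hc hε.le
      calc cylR z = ε * (ε⁻¹ * cylR z) := by field_simp
        _ ≤ ε * 2 := this
        _ = 2 * ε := by ring
  have hmollc : ∀ c : EuclideanSpace ℝ (Fin 3), Continuous (fun y => moll J ε (c - y)) := by
    intro c
    have h : Continuous fun y : EuclideanSpace ℝ (Fin 3) => ε⁻¹ • (c - y) := by fun_prop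
    exact continuous_const.mul (hJc.comp h)
  have hmollcs : ∀ c : EuclideanSpace ℝ (Fin 3),
      HasCompactSupport (fun y => moll J ε (c - y)) := by
    intro c
    apply HasCompactSupport.intro (isCompact_closedBall c (3 * ε))
    intro y hy
    by_contra h
    apply hy
    have h1 := (hmoll_supp _ h).1
    rw [Metric.mem_closedBall, dist_eq_norm, ← norm_sub_rev]
    exact h1
  have hmollI : ∀ c : EuclideanSpace ℝ (Fin 3), Integrable (fun y => moll J ε (c - y)) :=
    fun c => (hmollc c).integrable_of_hasCompactSupport (hmollcs c)
  have hmoll_int_one : ∀ c : EuclideanSpace ℝ (Fin 3), (∫ y, moll J ε (c - y)) = 1 := by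
    intro c
    rw [integral_sub_left_eq_self (moll J ε) volume c]
    have hfr : Module.finrank ℝ (EuclideanSpace ℝ (Fin 3)) = 3 := by simp
    calc (∫ z, moll J ε z) = ε⁻¹ ^ 3 * ∫ z, J (ε⁻¹ • z) := by
          simp only [moll]; rw [integral_const_mul]
      _ = 1 := by
          rw [Measure.integral_comp_inv_smul_of_nonneg volume J hε.le, hJint, hfr, smul_eq_mul,
            mul_one]
          field_simp
  set B := |M| + |m| + 1 with hB
  have hgb : ∀ y, |ρ₀ y - 1| ≤ B := by
    intro y
    obtain ⟨h1, h2⟩ := hb y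
    rw [abs_le]
    constructor <;> nlinarith [neg_abs_le m, le_abs_self M, abs_nonneg m, abs_nonneg M]
  have hρb : ∀ y, |ρ₀ y| ≤ B := by
    intro y
    obtain ⟨h1, h2⟩ := hb y
    rw [abs_le]
    constructor <;> nlinarith [neg_abs_le m, le_abs_self M, abs_nonneg m, abs_nonneg M]
  have hprodI : ∀ (c : EuclideanSpace ℝ (Fin 3)) (g : EuclideanSpace ℝ (Fin 3) → ℝ),
      Measurable g → (∀ y, |g y| ≤ B) →
      Integrable (fun y => moll J ε (c - y) * g y) := by
    intro c g hg hgB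
    apply Integrable.mono' ((hmollI c).const_mul B)
    · exact ((hmollc c).measurable.mul hg).aestronglyMeasurable
    · filter_upwards with y
      rw [Real.norm_eq_abs, abs_mul]
      calc |moll J ε (c - y)| * |g y| ≤ |moll J ε (c - y)| * B :=
            mul_le_mul_of_nonneg_left (hgB y) (abs_nonneg _)
        _ = B * moll J ε (c - y) := by rw [abs_of_nonneg (hmoll_nn _)]; ring
  have hρI : ∀ c : EuclideanSpace ℝ (Fin 3),
      Integrable (fun y => moll J ε (c - y) * ρ₀ y) :=
    fun c => hprodI c ρ₀ hmeas hρb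
  have hgI : ∀ c : EuclideanSpace ℝ (Fin 3),
      Integrable (fun y => moll J ε (c - y) * (ρ₀ y - 1)) :=
    fun c => hprodI c _ (hmeas.sub measurable_const) hgb
  have hdecomp : ∀ c : EuclideanSpace ℝ (Fin 3),
      (∫ y, moll J ε (c - y) * ρ₀ y) = (∫ y, moll J ε (c - y) * (ρ₀ y - 1)) + 1 := by
    intro c
    have heq : (fun y => moll J ε (c - y) * ρ₀ y)
        = fun y => moll J ε (c - y) * (ρ₀ y - 1) + moll J ε (c - y) :=
      funext fun y => by ring
    rw [heq, integral_add (hgI c) (hmollI c), hmoll_int_one]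
  constructor
  · intro x hx
    have hxa : x = axisPt (x 2) := cylR_zero_eq_axisPt hx
    rw [← hxa, hdecomp x]
    ring
  · intro x
    set a := axisPt (x 2) with ha
    set r := cylR x with hr
    have hr0 : 0 ≤ r := cylR_nonneg x
    have hxa_norm : ‖x - a‖ = r := (cylR_eq_norm x).symm
    have hΔI : Integrable (fun y => moll J ε (x - y) - moll J ε (a - y)) :=
      (hmollI x).sub (hmollI a)
    have hrewrite : ((∫ y, moll J ε (x - y) * ρ₀ y)
        - ∫ y, moll J ε (a - y) * (ρ₀ y - 1)) - 1
        = ∫ y, (moll J ε (x - y) - moll J ε (a - y)) * (ρ₀ y - 1) := by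
      rw [hdecomp x]
      have heq : (fun y => (moll J ε (x - y) - moll J ε (a - y)) * (ρ₀ y - 1))
          = fun y => moll J ε (x - y) * (ρ₀ y - 1) - moll J ε (a - y) * (ρ₀ y - 1) :=
        funext fun y => by ring
      rw [heq, integral_sub (hgI x) (hgI a)]
      ring
    rw [hrewrite]
    have hcyl : ∀ y, moll J ε (x - y) - moll J ε (a - y) ≠ 0 → cylR y ≤ r + 2 * ε := by
      intro y hy
      by_cases h1 : moll J ε (x - y) = 0
      · have h2 : moll J ε (a - y) ≠ 0 := fun h => hy (by rw [h1, h, sub_zero])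
        have h3 := (hmoll_supp _ h2).2
        have h4 := cylR_le a y
        rw [ha, cylR_axisPt] at h4
        linarith
      · have h3 := (hmoll_supp _ h1).2
        have h4 := cylR_le x y
        linarith
    have hptw : ∀ y, ‖(moll J ε (x - y) - moll J ε (a - y)) * (ρ₀ y - 1)‖
        ≤ |moll J ε (x - y) - moll J ε (a - y)| * (C₀ * (r + 2 * ε)) := by
      intro y
      rw [Real.norm_eq_abs, abs_mul]
      by_cases h : moll J ε (x - y) - moll J ε (a - y) = 0
      · rw [h]; simp
      · apply mul_le_mul_of_nonneg_left _ (abs_nonneg _)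
        calc |ρ₀ y - 1| ≤ C₀ * cylR y := hC₀ y
          _ ≤ C₀ * (r + 2 * ε) := mul_le_mul_of_nonneg_left (hcyl y h) hC₀0
    have hΔgI : Integrable
        (fun y => (moll J ε (x - y) - moll J ε (a - y)) * (ρ₀ y - 1)) := by
      have heq : (fun y => (moll J ε (x - y) - moll J ε (a - y)) * (ρ₀ y - 1))
          = fun y => moll J ε (x - y) * (ρ₀ y - 1) - moll J ε (a - y) * (ρ₀ y - 1) :=
        funext fun y => by ring
      rw [heq]
      exact (hgI x).sub (hgI a)
    have hmain : |∫ y, (moll J ε (x - y) - moll J ε (a - y)) * (ρ₀ y - 1)|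
        ≤ (∫ y, |moll J ε (x - y) - moll J ε (a - y)|) * (C₀ * (r + 2 * ε)) := by
      rw [← Real.norm_eq_abs]
      calc ‖∫ y, (moll J ε (x - y) - moll J ε (a - y)) * (ρ₀ y - 1)‖
          ≤ ∫ y, ‖(moll J ε (x - y) - moll J ε (a - y)) * (ρ₀ y - 1)‖ :=
            norm_integral_le_integral_norm _
        _ ≤ ∫ y, |moll J ε (x - y) - moll J ε (a - y)| * (C₀ * (r + 2 * ε)) :=
            integral_mono hΔgI.norm (hΔI.abs.mul_const _) hptw
        _ = (∫ y, |moll J ε (x - y) - moll J ε (a - y)|) * (C₀ * (r + 2 * ε)) :=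
            integral_mul_const _ _
    set I := ∫ y, |moll J ε (x - y) - moll J ε (a - y)| with hI
    have hInn : 0 ≤ I := integral_nonneg fun y => abs_nonneg _
    by_cases hcase : r ≤ ε
    · -- Lipschitz case
      have hball : ∀ y, moll J ε (x - y) - moll J ε (a - y) ≠ 0 →
          y ∈ Metric.closedBall a (4 * ε) := by
        intro y hy
        rw [Metric.mem_closedBall]
        by_cases h1 : moll J ε (x - y) = 0
        · have h2 : moll J ε (a - y) ≠ 0 := fun h => hy (by rw [h1, h, sub_zero])
          have h3 := (hmoll_supp _ h2).1
          rw [dist_eq_norm, ← norm_sub_rev]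
          linarith
        · have h3 := (hmoll_supp _ h1).1
          calc dist y a ≤ dist y x + dist x a := dist_triangle y x a
            _ ≤ 3 * ε + ε := by
                rw [dist_eq_norm, ← norm_sub_rev, dist_eq_norm, hxa_norm]
                exact add_le_add h3 hcase
            _ = 4 * ε := by ring
      have hlip : ∀ y, |moll J ε (x - y) - moll J ε (a - y)| ≤ ε⁻¹ ^ 4 * (K : ℝ) * r := by
        intro y
        have h1 : moll J ε (x - y) - moll J ε (a - y)
            = ε⁻¹ ^ 3 * (J (ε⁻¹ • (x - y)) - J (ε⁻¹ • (a - y))) := by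
          simp only [moll]; ring
        rw [h1, abs_mul, abs_of_nonneg (by positivity : (0:ℝ) ≤ ε⁻¹ ^ 3)]
        have h3 : ‖ε⁻¹ • (x - y) - ε⁻¹ • (a - y)‖ = ε⁻¹ * r := by
          rw [← smul_sub, show (x - y) - (a - y) = x - a by abel, norm_smul,
            Real.norm_eq_abs, abs_inv, abs_of_pos hε, hxa_norm]
        have h2 : |J (ε⁻¹ • (x - y)) - J (ε⁻¹ • (a - y))| ≤ (K : ℝ) * (ε⁻¹ * r) := by
          have h4 := hK.dist_le_mul (ε⁻¹ • (x - y)) (ε⁻¹ • (a - y))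
          rw [Real.dist_eq, dist_eq_norm, h3] at h4
          exact h4
        calc ε⁻¹ ^ 3 * |J (ε⁻¹ • (x - y)) - J (ε⁻¹ • (a - y))|
            ≤ ε⁻¹ ^ 3 * ((K : ℝ) * (ε⁻¹ * r)) :=
              mul_le_mul_of_nonneg_left h2 (by positivity)
          _ = ε⁻¹ ^ 4 * (K : ℝ) * r := by ring
      have hindI : Integrable (Set.indicator (Metric.closedBall a (4 * ε))
          (fun _ => ε⁻¹ ^ 4 * (K : ℝ) * r)) := by
        rw [integrable_indicator_iff measurableSet_closedBall]
        exact integrableOn_const measure_closedBall_lt_top.ne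
      have hvol : (volume (Metric.closedBall a (4 * ε))).toReal = (4 * ε) ^ 3 * V := by
        rw [Measure.addHaar_closedBall volume a (by positivity : (0:ℝ) ≤ 4 * ε)]
        rw [show Module.finrank ℝ (EuclideanSpace ℝ (Fin 3)) = 3 by simp]
        rw [ENNReal.toReal_mul, ENNReal.toReal_ofReal (by positivity)]
      have hIle : I ≤ ε⁻¹ ^ 4 * (K : ℝ) * r * ((4 * ε) ^ 3 * V) := by
        have hind : ∀ y, |moll J ε (x - y) - moll J ε (a - y)|
            ≤ Set.indicator (Metric.closedBall a (4 * ε))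
              (fun _ => ε⁻¹ ^ 4 * (K : ℝ) * r) y := by
          intro y
          by_cases h : moll J ε (x - y) - moll J ε (a - y) = 0
          · rw [h, abs_zero]
            exact Set.indicator_nonneg (fun _ _ => by positivity) y
          · rw [Set.indicator_of_mem (hball y h)]
            exact hlip y
        calc I ≤ ∫ y, Set.indicator (Metric.closedBall a (4 * ε))
              (fun _ => ε⁻¹ ^ 4 * (K : ℝ) * r) y := integral_mono hΔI.abs hindI hind
          _ = (volume (Metric.closedBall a (4 * ε))).toReal • (ε⁻¹ ^ 4 * (K : ℝ) * r) :=
              integral_indicator_const _ measurableSet_closedBall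
          _ = ε⁻¹ ^ 4 * (K : ℝ) * r * ((4 * ε) ^ 3 * V) := by
              rw [hvol, smul_eq_mul]; ring
      have hIeq : ε⁻¹ ^ 4 * (K : ℝ) * r * ((4 * ε) ^ 3 * V)
          = 64 * (K : ℝ) * V * r * ε⁻¹ := by
        field_simp
        ring
      calc |∫ y, (moll J ε (x - y) - moll J ε (a - y)) * (ρ₀ y - 1)|
          ≤ I * (C₀ * (r + 2 * ε)) := hmain
        _ ≤ (64 * (K : ℝ) * V * r * ε⁻¹) * (C₀ * (3 * ε)) := by
            apply mul_le_mul
            · rw [← hIeq]; exact hIle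
            · exact mul_le_mul_of_nonneg_left (by linarith) hC₀0
            · positivity
            · positivity
        _ = 192 * (K : ℝ) * V * C₀ * r * (ε⁻¹ * ε) := by ring
        _ = 192 * (K : ℝ) * V * C₀ * r := by
            rw [inv_mul_cancel₀ hε.ne', mul_one]
        _ ≤ (192 * (K : ℝ) * V + 6) * C₀ * r := by
            nlinarith [mul_nonneg hC₀0 hr0]
    · -- far case
      push_neg at hcase
      have hIle2 : I ≤ 2 := by
        have hptw2 : ∀ y, |moll J ε (x - y) - moll J ε (a - y)|
            ≤ moll J ε (x - y) + moll J ε (a - y) := by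
          intro y
          rw [abs_le]
          constructor <;> nlinarith [hmoll_nn (x - y), hmoll_nn (a - y)]
        calc I ≤ ∫ y, (moll J ε (x - y) + moll J ε (a - y)) :=
              integral_mono hΔI.abs ((hmollI x).add (hmollI a)) hptw2
          _ = 2 := by
              rw [integral_add (hmollI x) (hmollI a), hmoll_int_one, hmoll_int_one]
              norm_num
      calc |∫ y, (moll J ε (x - y) - moll J ε (a - y)) * (ρ₀ y - 1)|
          ≤ I * (C₀ * (r + 2 * ε)) := hmain
        _ ≤ 2 * (C₀ * (3 * r)) := by
            apply mul_le_mul hIle2 (mul_le_mul_of_nonneg_left (by linarith) hC₀0)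
              (by positivity) (by norm_num)
        _ ≤ (192 * (K : ℝ) * V + 6) * C₀ * r := by
            nlinarith [mul_nonneg hC₀0 hr0, mul_nonneg (mul_nonneg hKnn hVpos.le)
              (mul_nonneg hC₀0 hr0)]


/-- Mollified density bound near the axis: with
`ρ₀^ε(x) = (J^ε * ρ₀)(x) − (J^ε * (ρ₀−1))(0,0,x₃)` one has `ρ₀^ε = 1` on the axis
and `|ρ₀^ε(x) − 1| ≤ C C₀ r(x)` for a constant `C` depending only on `J`, where
`C₀ = ‖(ρ₀−1)/r‖_∞`. -/
theorem mollified_density_axis_bound (J : EuclideanSpace ℝ (Fin 3) → ℝ)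
    (hJreg : ContDiff ℝ (⊤ : ℕ∞) J) (hJ01 : ∀ x, 0 ≤ J x ∧ J x ≤ 1)
    (hJsupp : ∀ x, J x ≠ 0 → cylR x ≤ 2 ∧ |x 2| ≤ 1)
    (hJint : ∫ x, J x = 1)
    (hJaxi : ∀ x y, cylR x = cylR y → x 2 = y 2 → J x = J y) :
    ∃ C > (0 : ℝ), ∀ (ρ₀ : EuclideanSpace ℝ (Fin 3) → ℝ) (m M C₀ ε : ℝ),
      Measurable ρ₀ → 0 < m → (∀ x, m ≤ ρ₀ x ∧ ρ₀ x ≤ M) →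
      (∀ x y, cylR x = cylR y → x 2 = y 2 → ρ₀ x = ρ₀ y) →
      (∀ x, |ρ₀ x - 1| ≤ C₀ * cylR x) →
      0 < ε →
      (∀ x, cylR x = 0 →
        ((∫ y, moll J ε (x - y) * ρ₀ y)
          - ∫ y, moll J ε (axisPt (x 2) - y) * (ρ₀ y - 1)) = 1) ∧
      (∀ x, |((∫ y, moll J ε (x - y) * ρ₀ y)
          - ∫ y, moll J ε (axisPt (x 2) - y) * (ρ₀ y - 1)) - 1| ≤ C * C₀ * cylR x) :=
  mollified_density_axis_bound_aux J hJreg hJ01 hJsupp hJint hJaxi
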